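/- arXiv:2605.07080 — 3 statements merged into one kernel-verified Lean document; each statement's English description precedes it below -/
import Mathlib

section
/- Demand-perturbation stability of the greedy prefix allocation: let n ∈ ℕ, let N_1,…,N_n ≥ 0 and N̂_1,…,N̂_n ≥ 0 be real numbers, and let ŝ ≥ 0 be a real number. Define the prefix allocations Y_i = min{ N_i, (ŝ − Σ_{j=1}^{i−1} N_j)_+ } and Ŷ_i = min{ N̂_i, (ŝ − Σ_{j=1}^{i−1} N̂_j)_+ } for i = 1,…,n, where (x)_+ = max{x,0}. Then Σ_{i=1}^n |Y_i − Ŷ_i| ≤ 2·Σ_{i=1}^n |N_i − N̂_i|. -/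
open Finset

lemma alloc_eq (Ni P s : ℝ) (hN : 0 ≤ Ni) :
    min Ni (max (s - P) 0) = min (P + Ni) s - min P s := by
  simp only [min_def, max_def]
  split_ifs <;> linarith

lemma two_abs_le {A B R : ℝ} (h1 : A + B ≤ R) (h2 : A - B ≤ R)
    (h3 : -A + B ≤ R) (h4 : -A - B ≤ R) : |A| + |B| ≤ R := by
  rcases abs_cases A with ⟨ha,_⟩|⟨ha,_⟩ <;> rcases abs_cases B with ⟨hb,_⟩|⟨hb,_⟩ <;> linarith

lemma key_step (s a b u v : ℝ) (hu : 0 ≤ u) (hv : 0 ≤ v) :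
    |min (a+u) s - min a s - (min (b+v) s - min b s)| + |min (a+u) s - min (b+v) s|
      ≤ 2*|u-v| + |min a s - min b s| := by
  simp only [min_def]
  split_ifs <;>
  refine two_abs_le ?_ ?_ ?_ ?_ <;>
  rcases abs_cases (u-v) with ⟨h1,h2⟩|⟨h1,h2⟩ <;>
  rw [h1] <;>
  linarith [le_abs_self (a-b), neg_abs_le (a-b), le_abs_self (a-s), neg_abs_le (a-s),
    le_abs_self (s-b), neg_abs_le (s-b), abs_nonneg ((s:ℝ)-s)]

lemma aux_sum (s : ℝ) (N Nhat : ℕ → ℝ) (hN : ∀ i, 0 ≤ N i) (hNhat : ∀ i, 0 ≤ Nhat i) :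
    ∀ n : ℕ,
    ∑ i ∈ range n, |min (∑ j ∈ range i, N j + N i) s - min (∑ j ∈ range i, N j) s
        - (min (∑ j ∈ range i, Nhat j + Nhat i) s - min (∑ j ∈ range i, Nhat j) s)|
      + |min (∑ j ∈ range n, N j) s - min (∑ j ∈ range n, Nhat j) s|
      ≤ 2 * ∑ i ∈ range n, |N i - Nhat i| := by
  intro n
  induction n with
  | zero => simp
  | succ n ih =>
      have hkey := key_step s (∑ j ∈ range n, N j) (∑ j ∈ range n, Nhat j) (N n) (Nhat n)
        (hN n) (hNhat n)
      rw [Finset.sum_range_succ, Finset.sum_range_succ (fun i => |N i - Nhat i|),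
        Finset.sum_range_succ N, Finset.sum_range_succ Nhat]
      linarith

/-- **Demand-perturbation stability of the greedy prefix allocation.** With
`Y_i = min{N_i, (ŝ − Σ_{j<i} N_j)_+}` and `Ŷ_i = min{N̂_i, (ŝ − Σ_{j<i} N̂_j)_+}`,
one has `Σ_i |Y_i − Ŷ_i| ≤ 2·Σ_i |N_i − N̂_i|`. -/
theorem prefix_allocation_demand_stability (n : ℕ)
    (N Nhat : Fin n → ℝ) (hN : ∀ i, 0 ≤ N i) (hNhat : ∀ i, 0 ≤ Nhat i)
    (shat : ℝ) (hshat : 0 ≤ shat) :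
    ∑ i, |min (N i) (max (shat - ∑ j ∈ Iio i, N j) 0)
          - min (Nhat i) (max (shat - ∑ j ∈ Iio i, Nhat j) 0)|
      ≤ 2 * ∑ i, |N i - Nhat i| := by
  set N' : ℕ → ℝ := fun k => if h : k < n then N ⟨k, h⟩ else 0 with hN'
  set Nhat' : ℕ → ℝ := fun k => if h : k < n then Nhat ⟨k, h⟩ else 0 with hNhat'
  have hN'0 : ∀ k, 0 ≤ N' k := by intro k; simp only [hN']; split <;> simp [hN _]
  have hNhat'0 : ∀ k, 0 ≤ Nhat' k := by intro k; simp only [hNhat']; split <;> simp [hNhat _]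
  have hIio : ∀ (f : Fin n → ℝ) (f' : ℕ → ℝ), (∀ j : Fin n, f' j = f j) → ∀ i : Fin n,
      ∑ j ∈ Iio i, f j = ∑ j ∈ range (i : ℕ), f' j := by
    intro f f' hf i
    rw [← Nat.Iio_eq_range, ← Fin.map_valEmbedding_Iio, Finset.sum_map]
    exact Finset.sum_congr rfl fun j _ => (hf j).symm
  have hNf : ∀ j : Fin n, N' j = N j := by
    intro j; simp [hN', j.isLt]
  have hNhatf : ∀ j : Fin n, Nhat' j = Nhat j := by
    intro j; simp [hNhat', j.isLt]
  have hmain := aux_sum shat N' Nhat' hN'0 hNhat'0 n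
  have habs : 0 ≤ |min (∑ j ∈ range n, N' j) shat - min (∑ j ∈ range n, Nhat' j) shat| :=
    abs_nonneg _
  calc ∑ i, |min (N i) (max (shat - ∑ j ∈ Iio i, N j) 0)
          - min (Nhat i) (max (shat - ∑ j ∈ Iio i, Nhat j) 0)|
      = ∑ i ∈ range n, |min (∑ j ∈ range i, N' j + N' i) shat - min (∑ j ∈ range i, N' j) shat
          - (min (∑ j ∈ range i, Nhat' j + Nhat' i) shat
              - min (∑ j ∈ range i, Nhat' j) shat)| := by
        rw [← Fin.sum_univ_eq_sum_range]
        refine Finset.sum_congr rfl fun i _ => ?_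
        rw [hIio N N' hNf i, hIio Nhat Nhat' hNhatf i,
          alloc_eq (N i) (∑ j ∈ range (i:ℕ), N' j) shat (hN i),
          alloc_eq (Nhat i) (∑ j ∈ range (i:ℕ), Nhat' j) shat (hNhat i), hNf i, hNhatf i]
    _ ≤ 2 * ∑ i ∈ range n, |N' i - Nhat' i| := by linarith
    _ = 2 * ∑ i, |N i - Nhat i| := by
        rw [← Fin.sum_univ_eq_sum_range]
        exact congrArg _ (Finset.sum_congr rfl fun i _ => by rw [hNf i, hNhatf i])
end

section
/- Prediction-error bound for optimal allocation fractions: let n ∈ ℕ, let N_1,…,N_n ≥ 0 and N̂_1,…,N̂_n ≥ 0 and s, ŝ ≥ 0 be real numbers. Define the prefix allocations L_i = min{ N_i, (s − Σ_{j<i} N_j)_+ } and L̂_i = min{ N̂_i, (ŝ − Σ_{j<i} N̂_j)_+ }, where (x)_+ = max{x,0}. Assume L_i > 0 for some i and L̂_i > 0 for some i; set i* = max{ i : L_i > 0 } and î* = max{ i : L̂_i > 0 }, and define ζ = L_{i*}/N_{i*} (taking ζ = 1 if N_{i*} = 0) and ζ̂ = L̂_{î*}/N̂_{î*} (taking ζ̂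 = 1 if N̂_{î*} = 0). Define γ_i = 1 for i < i*, γ_{i*} = ζ, γ_i = 0 for i > i*, and γ̂_i = 1 for i < î*, γ̂_{î*} = ζ̂, γ̂_i = 0 for i > î*. Then Σ_{i=1}^n N_i·|γ_i − γ̂_i| ≤ |s − ŝ| + 3·Σ_{i=1}^n |N_i − N̂_i|. -/
open Finset

/-!
Both fraction vectors are monotone step profiles (ones, then a value in `[0, 1]`, then zeros),
so they are pointwise comparable and the weighted distance `Σ N_i |γ_i - γ̂_i|` collapses to
`|Σ N_i γ_i - Σ N_i γ̂_i|`. Weighting by `N` turns a fraction vector back into its allocation,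
and a greedy allocation of budget `s` has total `min(s₊, Σ N)`, which is 1-Lipschitz in `(s, N)`.
Replacing the weights `N` by `N̂` in the second sum costs at most `Σ |N_i - N̂_i|` once more.
-/

variable {n : ℕ}

def greedyAlloc (s : ℝ) (N : Fin n → ℝ) (i : Fin n) : ℝ :=
  min (N i) (max (s - ∑ j ∈ Iio i, N j) 0)

def fractionVector (k : Fin n) (ζ : ℝ) (i : Fin n) : ℝ :=
  if i < k then 1 else if i = k then ζ else 0

lemma min_max_sub_zero_eq_sub_min {a p : ℝ} (ha : 0 ≤ a) (hp : 0 ≤ p) (s : ℝ) :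
    min a (max (s - p) 0) = min (max s 0) (p + a) - min (max s 0) p := by
  simp only [min_def, max_def]
  split_ifs <;> linarith

section GreedyAlloc

variable {N : Fin n → ℝ} {s : ℝ}

lemma greedyAlloc_le (i : Fin n) : greedyAlloc s N i ≤ N i :=
  min_le_left _ _

lemma greedyAlloc_nonneg (hN : ∀ i, 0 ≤ N i) (i : Fin n) : 0 ≤ greedyAlloc s N i :=
  le_min (hN i) (le_max_right _ _)

lemma pos_of_greedyAlloc_pos {k : Fin n} (hk : 0 < greedyAlloc s N k) : 0 < N k :=
  hk.trans_le (greedyAlloc_le k)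

lemma greedyAlloc_div_mem_Icc (hN : ∀ i, 0 ≤ N i) (i : Fin n) :
    greedyAlloc s N i / N i ∈ Set.Icc 0 1 :=
  ⟨div_nonneg (greedyAlloc_nonneg hN i) (hN i), div_le_one_of_le₀ (greedyAlloc_le i) (hN i)⟩

lemma sum_Iio_lt_of_greedyAlloc_pos {k : Fin n} (hk : 0 < greedyAlloc s N k) :
    ∑ j ∈ Iio k, N j < s := by
  by_contra! h
  have : max (s - ∑ j ∈ Iio k, N j) 0 = 0 := max_eq_right (by linarith)
  exact hk.not_ge (this ▸ min_le_right _ _)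

lemma greedyAlloc_eq_of_lt (hN : ∀ i, 0 ≤ N i) {i k : Fin n} (hk : 0 < greedyAlloc s N k)
    (hik : i < k) : greedyAlloc s N i = N i := by
  have hprefix : ∑ j ∈ Iio i, N j + N i ≤ ∑ j ∈ Iio k, N j := by
    rw [sum_Iio_add_eq_sum_Iic]
    exact sum_le_sum_of_subset_of_nonneg (fun j hj => mem_Iio.mpr ((mem_Iic.mp hj).trans_lt hik))
      fun j _ _ => hN j
  have := sum_Iio_lt_of_greedyAlloc_pos hk
  exact min_eq_left (le_max_of_le_left (by linarith))

/-- Each greedy allocation is an increment of `x ↦ min(s₊, x)` along the prefix sums of `N`,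
so the total telescopes. -/
theorem sum_greedyAlloc (hN : ∀ i, 0 ≤ N i) (s : ℝ) :
    ∑ i, greedyAlloc s N i = min (max s 0) (∑ i, N i) := by
  set F : ℝ → ℝ := fun x => min (max s 0) x
  set P : ℕ → ℝ := fun k => ∑ j ∈ univ.filter (fun j : Fin n => (j : ℕ) < k), N j
  have hstep (i : Fin n) : greedyAlloc s N i = F (P (i + 1)) - F (P i) := by
    have hIio : univ.filter (fun j : Fin n => (j : ℕ) < i) = Iio i := by
      ext j; simp only [mem_filter, mem_univ, true_and, mem_Iio, Fin.lt_def]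
    have hIic : univ.filter (fun j : Fin n => (j : ℕ) < i + 1) = Iic i := by
      ext j; simp only [mem_filter, mem_univ, true_and, mem_Iic, Fin.le_def, Nat.lt_succ_iff]
    simp only [P, F, hIio, hIic, ← sum_Iio_add_eq_sum_Iic]
    exact min_max_sub_zero_eq_sub_min (hN i) (sum_nonneg fun j _ => hN j) s
  calc ∑ i, greedyAlloc s N i = ∑ k ∈ range n, (F (P (k + 1)) - F (P k)) := by
        rw [← Fin.sum_univ_eq_sum_range (fun k => F (P (k + 1)) - F (P k))]
        exact sum_congr rfl fun i _ => hstep i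
    _ = F (P n) - F (P 0) := sum_range_sub (fun k => F (P k)) n
    _ = min (max s 0) (∑ i, N i) := by simp [F, P]

theorem sum_mul_fractionVector_greedyAlloc (hN : ∀ i, 0 ≤ N i) {k : Fin n}
    (hk : 0 < greedyAlloc s N k) (hk_max : ∀ j, 0 < greedyAlloc s N j → j ≤ k) :
    ∑ i, N i * fractionVector k (greedyAlloc s N k / N k) i = min (max s 0) (∑ i, N i) := by
  rw [← sum_greedyAlloc hN s]
  refine sum_congr rfl fun i _ => ?_
  rcases lt_trichotomy i k with hik | rfl | hki
  · simp [fractionVector, hik, greedyAlloc_eq_of_lt hN hk hik]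
  · simp [fractionVector, mul_div_cancel₀ _ (pos_of_greedyAlloc_pos hk).ne']
  · have hzero : greedyAlloc s N i = 0 :=
      ((greedyAlloc_nonneg hN i).eq_of_not_lt fun hpos => (hk_max i hpos).not_gt hki).symm
    simp [fractionVector, hki.not_gt, hki.ne', hzero]

end GreedyAlloc

section FractionVector

variable {k k' : Fin n} {ζ ζ' : ℝ}

lemma abs_fractionVector_le_one (hζ : ζ ∈ Set.Icc 0 1) (i : Fin n) :
    |fractionVector k ζ i| ≤ 1 := by
  unfold fractionVector
  split_ifs
  exacts [abs_one.le, abs_le.mpr ⟨by linarith [hζ.1], hζ.2⟩, abs_zero.trans_le zero_le_one]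

lemma fractionVector_mono (k : Fin n) : Monotone (fractionVector k) := by
  intro ζ ζ' h i
  unfold fractionVector
  split_ifs <;> first | exact h | exact le_rfl

lemma fractionVector_le_of_lt (hk : k < k') (hζ : ζ ≤ 1) (hζ' : 0 ≤ ζ') :
    fractionVector k ζ ≤ fractionVector k' ζ' := by
  intro i
  unfold fractionVector
  split_ifs <;> first | order | norm_num

lemma fractionVector_le_total (hζ : ζ ∈ Set.Icc 0 1) (hζ' : ζ' ∈ Set.Icc 0 1) :
    fractionVector k ζ ≤ fractionVector k' ζ' ∨
      fractionVector k' ζ' ≤ fractionVector k ζ := by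
  rcases lt_trichotomy k k' with hk | rfl | hk
  · exact .inl (fractionVector_le_of_lt hk hζ.2 hζ'.1)
  · exact (le_total ζ ζ').imp (fractionVector_mono k ·) (fractionVector_mono k ·)
  · exact .inr (fractionVector_le_of_lt hk hζ'.2 hζ.1)

end FractionVector

section WeightedSums

variable {ι : Type*} [Fintype ι] {w w' γ γ' : ι → ℝ}

lemma sum_mul_abs_sub_of_le_total (hw : ∀ i, 0 ≤ w i) (hγ : γ ≤ γ' ∨ γ' ≤ γ) :
    ∑ i, w i * |γ i - γ' i| = |∑ i, w i * γ i - ∑ i, w i * γ' i| := by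
  simp_rw [← sum_sub_distrib, ← mul_sub]
  rcases hγ with h | h
  · rw [abs_of_nonpos (sum_nonpos fun i _ => mul_nonpos_of_nonneg_of_nonpos (hw i)
      (sub_nonpos.mpr (h i))), ← sum_neg_distrib]
    exact sum_congr rfl fun i _ => by rw [abs_of_nonpos (sub_nonpos.mpr (h i))]; ring
  · rw [abs_of_nonneg (sum_nonneg fun i _ => mul_nonneg (hw i) (sub_nonneg.mpr (h i)))]
    exact sum_congr rfl fun i _ => by rw [abs_of_nonneg (sub_nonneg.mpr (h i))]

lemma abs_sum_mul_sub_sum_mul_le (hγ : ∀ i, |γ i| ≤ 1) :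
    |∑ i, w i * γ i - ∑ i, w' i * γ i| ≤ ∑ i, |w i - w' i| := by
  simp_rw [← sum_sub_distrib, ← sub_mul]
  refine (abs_sum_le_sum_abs _ _).trans (sum_le_sum fun i _ => ?_)
  rw [abs_mul]
  exact mul_le_of_le_one_right (abs_nonneg _) (hγ i)

lemma abs_sum_sub_sum_le (w w' : ι → ℝ) :
    |∑ i, w i - ∑ i, w' i| ≤ ∑ i, |w i - w' i| := by
  rw [← sum_sub_distrib]
  exact abs_sum_le_sum_abs _ _

end WeightedSums

lemma abs_min_max_sub_min_max_le (s s' x x' : ℝ) :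
    |min (max s 0) x - min (max s' 0) x'| ≤ |s - s'| + |x - x'| :=
  (abs_min_sub_min_le_max _ _ _ _).trans <| max_le
    (le_add_of_le_of_nonneg (abs_max_sub_max_le_abs _ _ _) (abs_nonneg _))
    (le_add_of_nonneg_left (abs_nonneg _))

theorem prediction_error_bound_for_fractions_general (n : ℕ)
    (N Nhat : Fin n → ℝ) (hN : ∀ i, 0 ≤ N i) (hNhat : ∀ i, 0 ≤ Nhat i)
    (s shat : ℝ)
    (L Lhat : Fin n → ℝ)
    (hL : ∀ i, L i = min (N i) (max (s - ∑ j ∈ Iio i, N j) 0))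
    (hLhat : ∀ i, Lhat i = min (Nhat i) (max (shat - ∑ j ∈ Iio i, Nhat j) 0))
    (istar ihat : Fin n)
    (histar : 0 < L istar) (histar' : ∀ j, 0 < L j → j ≤ istar)
    (hihat : 0 < Lhat ihat) (hihat' : ∀ j, 0 < Lhat j → j ≤ ihat)
    (ζ ζhat : ℝ)
    (hζ : ζ = if N istar = 0 then 1 else L istar / N istar)
    (hζhat : ζhat = if Nhat ihat = 0 then 1 else Lhat ihat / Nhat ihat)
    (γ γhat : Fin n → ℝ)
    (hγ : ∀ i, γ i = if i < istar then 1 else if i = istar then ζ else 0)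
    (hγhat : ∀ i, γhat i = if i < ihat then 1 else if i = ihat then ζhat else 0) :
    ∑ i, N i * |γ i - γhat i| ≤ |s - shat| + 3 * ∑ i, |N i - Nhat i| := by
  obtain rfl : L = greedyAlloc s N := funext hL
  obtain rfl : Lhat = greedyAlloc shat Nhat := funext hLhat
  rw [if_neg (pos_of_greedyAlloc_pos histar).ne'] at hζ
  rw [if_neg (pos_of_greedyAlloc_pos hihat).ne'] at hζhat
  have hγ_eq : γ = fractionVector istar ζ := funext hγ
  have hγhat_eq : γhat = fractionVector ihat ζhat := funext hγhat
  have hζ_mem := hζ ▸ greedyAlloc_div_mem_Icc hN istar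
  have hζhat_mem := hζhat ▸ greedyAlloc_div_mem_Icc hNhat ihat
  have hsum : ∑ i, N i * γ i = min (max s 0) (∑ i, N i) :=
    hγ_eq ▸ hζ ▸ sum_mul_fractionVector_greedyAlloc hN histar histar'
  have hsumhat : ∑ i, Nhat i * γhat i = min (max shat 0) (∑ i, Nhat i) :=
    hγhat_eq ▸ hζhat ▸ sum_mul_fractionVector_greedyAlloc hNhat hihat hihat'
  have hγhat_abs : ∀ i, |γhat i| ≤ 1 := hγhat_eq ▸ abs_fractionVector_le_one hζhat_mem
  calc ∑ i, N i * |γ i - γhat i| = |∑ i, N i * γ i - ∑ i, N i * γhat i| :=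
        sum_mul_abs_sub_of_le_total hN <|
          hγ_eq ▸ hγhat_eq ▸ fractionVector_le_total hζ_mem hζhat_mem
    _ ≤ |∑ i, N i * γ i - ∑ i, Nhat i * γhat i|
          + |∑ i, Nhat i * γhat i - ∑ i, N i * γhat i| := abs_sub_le _ _ _
    _ ≤ (|s - shat| + |∑ i, N i - ∑ i, Nhat i|) + ∑ i, |N i - Nhat i| := by
        refine add_le_add ?_ ((abs_sub_comm _ _).trans_le (abs_sum_mul_sub_sum_mul_le hγhat_abs))
        rw [hsum, hsumhat]
        exact abs_min_max_sub_min_max_le _ _ _ _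
    _ ≤ |s - shat| + 3 * ∑ i, |N i - Nhat i| := by
        have : 0 ≤ ∑ i, |N i - Nhat i| := sum_nonneg fun i _ => abs_nonneg _
        linarith [abs_sum_sub_sum_le N Nhat]

/-- **Prediction-error bound for optimal allocation fractions.** Let `L`, `L̂` be
the greedy prefix allocations for `(s, N)` and `(ŝ, N̂)`, let `i*`, `î*` be the
largest indices with positive allocation, `ζ = L_{i*}/N_{i*}` (and `ζ = 1` if
`N_{i*} = 0`), similarly `ζ̂`, and let `γ`, `γ̂` be the corresponding fraction
vectors (ones before the pivot, the pivotal value at the pivot, zeros after).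
Then `Σ_i N_i·|γ_i − γ̂_i| ≤ |s − ŝ| + 3·Σ_i |N_i − N̂_i|`. -/
theorem prediction_error_bound_for_fractions (n : ℕ)
    (N Nhat : Fin n → ℝ) (hN : ∀ i, 0 ≤ N i) (hNhat : ∀ i, 0 ≤ Nhat i)
    (s shat : ℝ) (hs : 0 ≤ s) (hshat : 0 ≤ shat)
    (L Lhat : Fin n → ℝ)
    (hL : ∀ i, L i = min (N i) (max (s - ∑ j ∈ Iio i, N j) 0))
    (hLhat : ∀ i, Lhat i = min (Nhat i) (max (shat - ∑ j ∈ Iio i, Nhat j) 0))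
    (istar ihat : Fin n)
    (histar : 0 < L istar) (histar' : ∀ j, 0 < L j → j ≤ istar)
    (hihat : 0 < Lhat ihat) (hihat' : ∀ j, 0 < Lhat j → j ≤ ihat)
    (ζ ζhat : ℝ)
    (hζ : ζ = if N istar = 0 then 1 else L istar / N istar)
    (hζhat : ζhat = if Nhat ihat = 0 then 1 else Lhat ihat / Nhat ihat)
    (γ γhat : Fin n → ℝ)
    (hγ : ∀ i, γ i = if i < istar then 1 else if i = istar then ζ else 0)
    (hγhat : ∀ i, γhat i = if i < ihat then 1 else if i = ihat then ζhat else 0) :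
    ∑ i, N i * |γ i - γhat i| ≤ |s - shat| + 3 * ∑ i, |N i - Nhat i| :=
  prediction_error_bound_for_fractions_general n N Nhat hN hNhat s shat L Lhat hL hLhat istar ihat
    histar histar' hihat hihat' ζ ζhat hζ hζhat γ γhat hγ hγhat
end

section
/- Prediction-guided thresholds dominate the predicted fractions on the suffix: let the prediction-guided thresholds γ_1,…,γ_n and the quantities î*, ζ̂, lower_i, upper_i be as in the prediction-guided construction, and let γ̂_i = 1 for i < î*, γ̂_{î*} = ζ̂, γ̂_i = 0 for i > î*. Define i' = n if ŝ ≥ Σ_{j=1}^n N̂_j; i' = î* − 1 if γ_{î*} < upper_{î*}; and i' = î* otherwise. Then γ_i ≥ γ̂_i for every i ∈ {i'+1,…,n}. -/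
open Finset

/-- **Prediction-guided thresholds dominate the predicted fractions on the
suffix.** With `i' = n` if `ŝ ≥ Σ_j N̂_j`; `i' = î* − 1` if `γ_{î*} < upper_{î*}`;
and `i' = î*` otherwise (`i'` counted as a 1-indexed position, so the suffix
`{i'+1,…,n}` consists of the sites with `Fin`-index `≥ i'`), one has
`γ_i ≥ γ̂_i` for every site `i` in the suffix. -/
theorem prediction_guided_dominates_on_suffix
    (n : ℕ) (hn : 0 < n) (c b : Fin n → ℕ) (hc : ∀ i, 1 ≤ c i)
    (w : Fin n → ℝ) (hw : ∀ i, 0 ≤ w i)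
    (p : ℝ) (hp : 0 ≤ p) (hwp : ∀ i, w i ≤ p * c i)
    (hord : ∀ i j : Fin n, i ≤ j → w i / c i ≤ w j / c j)
    (lam : ℝ) (hlam0 : 0 < lam) (hlam1 : lam ≤ 1 / 3)
    (shat : ℝ) (hshat : 0 ≤ shat)
    (Dhat : Fin n → ℝ) (hDhat : ∀ i, 0 ≤ Dhat i)
    (Nhat : Fin n → ℝ) (hNhat : ∀ i, Nhat i = max (Dhat i - (b i : ℝ)) 0)
    (τ : ℝ) (hτ : τ = (Real.sqrt (1 + lam) - Real.sqrt lam) ^ 2)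
    (lower upper : Fin n → ℝ)
    (hlower : ∀ i, lower i = if w i = 0 then 1 else min 1 (lam * p * c i / w i))
    (hupper : ∀ i, upper i = if w i = 0 then 1 else min 1 (τ * p * c i / w i))
    (ihat : Fin n) (ζhat : ℝ)
    (hpivA : (∑ j, Nhat j) ≤ shat → (ihat : ℕ) = n - 1 ∧ ζhat = 1)
    (hpivB : shat < ∑ j, Nhat j →
      shat ≤ ∑ j ∈ Iic ihat, Nhat j ∧
      (∀ j : Fin n, shat ≤ ∑ k ∈ Iic j, Nhat k → ihat ≤ j) ∧
      ζhat = max (shat - ∑ j ∈ Iio ihat, Nhat j) 0 / Nhat ihat)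
    (γ : Fin n → ℝ)
    (hγdef : ∀ i, γ i =
      if i < ihat then upper i
      else if i = ihat then min (upper ihat) (max ζhat (lower ihat))
      else lower i)
    (γhat : Fin n → ℝ)
    (hγhat : ∀ i, γhat i = if i < ihat then 1 else if i = ihat then ζhat else 0)
    (iprime : ℕ)
    (hiprime : iprime = if (∑ j, Nhat j) ≤ shat then n
      else if γ ihat < upper ihat then (ihat : ℕ) else (ihat : ℕ) + 1) :
    ∀ j : Fin n, iprime ≤ (j : ℕ) → γhat j ≤ γ j := by
  intro j hj
  rw [hiprime] at hj
  have hlow : ∀ i, (0:ℝ) ≤ lower i := by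
    intro i
    rw [hlower i]
    split
    · norm_num
    · next hwi =>
      have hwi' : 0 < w i := lt_of_le_of_ne (hw i) (Ne.symm hwi)
      have hci : (0:ℝ) ≤ (c i : ℝ) := Nat.cast_nonneg _
      have : (0:ℝ) ≤ lam * p * c i / w i := by positivity
      exact le_min zero_le_one this
  by_cases hA : (∑ j, Nhat j) ≤ shat
  · rw [if_pos hA] at hj
    exact absurd hj (Nat.not_le.mpr j.isLt)
  · rw [if_neg hA] at hj
    have hgt : ∀ k : Fin n, ihat < k → γhat k ≤ γ k := by
      intro k hk
      rw [hγhat k, if_neg (by exact fun h => absurd (h.trans hk) (lt_irrefl _)),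
        if_neg (by exact fun h => absurd h (by exact ne_of_gt hk)),
        hγdef k, if_neg (by exact fun h => absurd (h.trans hk) (lt_irrefl _)),
        if_neg (by exact fun h => absurd h (by exact ne_of_gt hk))]
      exact hlow k
    by_cases hG : γ ihat < upper ihat
    · rw [if_pos hG] at hj
      rcases eq_or_lt_of_le hj with heq | hlt
      · have hje : j = ihat := by
          apply Fin.ext; omega
        subst hje
        rw [hγhat j, if_neg (lt_irrefl _), if_pos rfl]
        rw [hγdef j, if_neg (lt_irrefl _), if_pos rfl] at hG ⊢
        have : max ζhat (lower j) < upper j := by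
          by_contra h
          push_neg at h
          rw [min_eq_left h] at hG
          exact absurd hG (lt_irrefl _)
        rw [min_eq_right this.le]
        exact le_max_left _ _
      · exact hgt j (by exact Fin.lt_def.mpr hlt)
    · rw [if_neg hG] at hj
      exact hgt j (by exact Fin.lt_def.mpr (by omega))
end
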